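/- Let Γ=(G,σ) be a weighted signed graph and μ a measure on V. Then h₁^σ(μ) = min over all signatures σ' switching equivalent to σ of the minimum over all nonempty subsets S ⊆ V of ρ^{σ'}(S), where ρ^{σ'}(S) = (|E⁻(S)|(σ') + |E(S, V∖S)|)/vol_μ(S) and the negative edges in |E⁻(S)|(σ') are determined by σ'. -/
import Mathlib


open Finset Real

open scoped Classical

noncomputable section

namespace SignedGraph

variable {N : ℕ}

/-- The degree `d(u) = Σ_v w(u,v)` of a vertex. -/
def deg (w : Fin N → Fin N → ℝ) (u : Fin N) : ℝ := ∑ v, w u v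

/-- Hypotheses making `(w, sgn)` a weighted signed graph: `w` is a symmetric nonnegative
weight function vanishing on the diagonal and `sgn` is a symmetric `±1`-valued signature. -/
structure IsWSG {N : ℕ} (w : Fin N → Fin N → ℝ) (sgn : Fin N → Fin N → ℝ) : Prop where
  w_symm : ∀ u v, w u v = w v u
  w_nonneg : ∀ u v, 0 ≤ w u v
  w_loopless : ∀ u, w u u = 0
  sgn_symm : ∀ u v, sgn u v = sgn v u
  sgn_pm : ∀ u v, sgn u v = 1 ∨ sgn u v = -1

/-- The signature obtained from `sgn` by switching with the function `θ : V → {±1}`. -/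
def switchSgn (sgn : Fin N → Fin N → ℝ) (θ : Fin N → ℝ) : Fin N → Fin N → ℝ :=
  fun u v => θ u * sgn u v * θ v

/-- `|E(S,T)| = Σ_{u∈S, v∈T} w(u,v)`. -/
def EE (w : Fin N → Fin N → ℝ) (S T : Finset (Fin N)) : ℝ := ∑ u ∈ S, ∑ v ∈ T, w u v

/-- `|E⁺(S,T)|`: total weight of positive edges from `S` to `T`. -/
def Epos (w sgn : Fin N → Fin N → ℝ) (S T : Finset (Fin N)) : ℝ :=
  ∑ u ∈ S, ∑ v ∈ T, if sgn u v = 1 then w u v else 0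

/-- `|E⁻(S,T)|`: total weight of negative edges from `S` to `T`. -/
def Eneg (w sgn : Fin N → Fin N → ℝ) (S T : Finset (Fin N)) : ℝ :=
  ∑ u ∈ S, ∑ v ∈ T, if sgn u v = -1 then w u v else 0

/-- `vol_μ(S) = Σ_{u∈S} μ(u)`. -/
def vol (μ : Fin N → ℝ) (S : Finset (Fin N)) : ℝ := ∑ u ∈ S, μ u

/-- The signed bipartiteness ratio `β^σ(V₁,V₂)`. -/
def betaR (w sgn : Fin N → Fin N → ℝ) (μ : Fin N → ℝ) (V1 V2 : Finset (Fin N)) : ℝ :=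
  (2 * Epos w sgn V1 V2 + Eneg w sgn V1 V1 + Eneg w sgn V2 V2 +
      EE w (V1 ∪ V2) (V1 ∪ V2)ᶜ) / vol μ (V1 ∪ V2)

/-- The signed Cheeger constant `h₁^σ(μ)`: the minimum of `β^σ(V₁,V₂)` over all pairs of
disjoint subsets with nonempty union. -/
def h1 (w sgn : Fin N → Fin N → ℝ) (μ : Fin N → ℝ) : ℝ :=
  sInf {x | ∃ V1 V2 : Finset (Fin N),
    Disjoint V1 V2 ∧ (V1 ∪ V2).Nonempty ∧ x = betaR w sgn μ V1 V2}

/-- The signed expansion `ρ^σ(S) = (|E⁻(S)| + |E(S, V∖S)|)/vol_μ(S)`. -/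
def rho (w sgn : Fin N → Fin N → ℝ) (μ : Fin N → ℝ) (S : Finset (Fin N)) : ℝ :=
  (Eneg w sgn S S + EE w S Sᶜ) / vol μ S

lemma filter_union_filter {N : ℕ} (θ : Fin N → ℝ) (hθ : ∀ u, θ u = 1 ∨ θ u = -1)
    (S : Finset (Fin N)) :
    S.filter (fun u => θ u = 1) ∪ S.filter (fun u => θ u = -1) = S := by
  ext a
  simp only [Finset.mem_union, Finset.mem_filter]
  constructor
  · rintro (⟨h, _⟩ | ⟨h, _⟩) <;> exact h
  · intro h
    rcases hθ a with h1 | h1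
    exacts [Or.inl ⟨h, h1⟩, Or.inr ⟨h, h1⟩]

lemma Eneg_switch {N : ℕ} (w sgn : Fin N → Fin N → ℝ) (hG : IsWSG w sgn)
    (θ : Fin N → ℝ) (V1 V2 : Finset (Fin N)) (hd : Disjoint V1 V2)
    (hθ1 : ∀ u ∈ V1, θ u = 1) (hθ2 : ∀ u ∈ V2, θ u = -1) :
    Eneg w (switchSgn sgn θ) (V1 ∪ V2) (V1 ∪ V2) =
      2 * Epos w sgn V1 V2 + Eneg w sgn V1 V1 + Eneg w sgn V2 V2 := by
  have key : ∀ (A B : Finset (Fin N)) (a b s : ℝ)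
      (_ : ∀ u ∈ A, θ u = a) (_ : ∀ v ∈ B, θ v = b) (_ : a * b = -s) (_ : s * s = 1),
      (∑ u ∈ A, ∑ v ∈ B, if switchSgn sgn θ u v = -1 then w u v else 0) =
      ∑ u ∈ A, ∑ v ∈ B, if sgn u v = s then w u v else 0 := by
    intro A B a b s hA hB hab hs
    refine Finset.sum_congr rfl fun u hu => Finset.sum_congr rfl fun v hv => ?_
    have hsw : switchSgn sgn θ u v = -s * sgn u v := by
      unfold switchSgn; rw [hA u hu, hB v hv]; linear_combination sgn u v * hab
    rw [hsw]
    refine if_congr ?_ rfl rfl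
    constructor
    · intro h
      have h2 : s * (-s * sgn u v) = s * (-1) := by rw [h]
      linear_combination -h2 - sgn u v * hs
    · intro h
      rw [h]; linear_combination -hs
  have hEposcomm : (∑ u ∈ V2, ∑ v ∈ V1, if sgn u v = 1 then w u v else 0)
      = Epos w sgn V1 V2 := by
    unfold Epos
    rw [Finset.sum_comm]
    refine Finset.sum_congr rfl fun u _ => Finset.sum_congr rfl fun v _ => ?_
    rw [hG.sgn_symm v u, hG.w_symm v u]
  unfold Eneg
  rw [Finset.sum_union hd]
  simp_rw [Finset.sum_union hd]
  rw [Finset.sum_add_distrib, Finset.sum_add_distrib]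
  rw [key V1 V1 1 1 (-1) hθ1 hθ1 (by ring) (by ring),
      key V1 V2 1 (-1) 1 hθ1 hθ2 (by ring) (by ring),
      key V2 V1 (-1) 1 1 hθ2 hθ1 (by ring) (by ring),
      key V2 V2 (-1) (-1) (-1) hθ2 hθ2 (by ring) (by ring),
      hEposcomm]
  unfold Epos
  ring

lemma betaR_eq_rho {N : ℕ} (w sgn : Fin N → Fin N → ℝ) (hG : IsWSG w sgn)
    (μ : Fin N → ℝ) (θ : Fin N → ℝ) (V1 V2 : Finset (Fin N)) (hd : Disjoint V1 V2)
    (hθ1 : ∀ u ∈ V1, θ u = 1) (hθ2 : ∀ u ∈ V2, θ u = -1) :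
    betaR w sgn μ V1 V2 = rho w (switchSgn sgn θ) μ (V1 ∪ V2) := by
  unfold betaR rho
  rw [Eneg_switch w sgn hG θ V1 V2 hd hθ1 hθ2]

/-- `h₁^σ(μ)` equals the minimum, over all signatures `σ'` switching
equivalent to `σ` and all nonempty subsets `S ⊆ V`, of the signed expansion `ρ^{σ'}(S)`. -/
theorem h1_eq_min_signed_expansion {N : ℕ} (w sgn : Fin N → Fin N → ℝ) (hG : IsWSG w sgn)
    (μ : Fin N → ℝ) (hμ : ∀ u, 0 < μ u) :
    h1 w sgn μ = sInf {x | ∃ θ : Fin N → ℝ, (∀ u, θ u = 1 ∨ θ u = -1) ∧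
      ∃ S : Finset (Fin N), S.Nonempty ∧ x = rho w (switchSgn sgn θ) μ S} := by
  unfold h1
  congr 1
  ext x
  constructor
  · rintro ⟨V1, V2, hd, hne, rfl⟩
    refine ⟨fun u => if u ∈ V2 then -1 else 1, fun u => by by_cases h : u ∈ V2 <;> simp [h],
      V1 ∪ V2, hne, ?_⟩
    exact betaR_eq_rho w sgn hG μ _ V1 V2 hd
      (fun u hu => by simp [Finset.disjoint_left.mp hd hu])
      (fun u hu => by simp [hu])
  · rintro ⟨θ, hθ, S, hS, rfl⟩
    refine ⟨S.filter (fun u => θ u = 1), S.filter (fun u => θ u = -1), ?_, ?_, ?_⟩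
    · rw [Finset.disjoint_left]
      intro a ha hb
      simp only [Finset.mem_filter] at ha hb
      rw [ha.2] at hb; linarith [hb.2]
    · rwa [filter_union_filter θ hθ S]
    · rw [betaR_eq_rho w sgn hG μ θ _ _ ?_ (fun u hu => (Finset.mem_filter.mp hu).2)
        (fun u hu => (Finset.mem_filter.mp hu).2)]
      · rw [filter_union_filter θ hθ S]
      · rw [Finset.disjoint_left]
        intro a ha hb
        simp only [Finset.mem_filter] at ha hb
        rw [ha.2] at hb; linarith [hb.2]

end SignedGraph
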